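/- For an $L_x \times L_y$ rectangular lattice with $\max(L_x,L_y) \le m \le L_x + L_y - 2$, the number of unordered pairs of distinct lattice sites whose taxicab distance equals $m$ is $\frac{k(k+1)(k+2)}{3}$, where $k = L_x + L_y - 1 - m$. -/

import Mathlib

/-- Taxicab distance between two integer lattice points. -/
def taxi (p q : ℤ × ℤ) : ℤ := |p.1 - q.1| + |p.2 - q.2|

/-- The `Lx × Ly` rectangular lattice `{1,…,Lx} × {1,…,Ly}`. -/
noncomputable def sites (Lx Ly : ℤ) : Finset (ℤ × ℤ) := Finset.Icc (1, 1) (Lx, Ly)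

/-- The number of unordered pairs of distinct lattice sites at taxicab distance `m`. -/
noncomputable def pairCount (Lx Ly m : ℤ) : ℕ :=
  (((sites Lx Ly).powersetCard 2).filter
    (fun s => ∃ p ∈ s, ∃ q ∈ s, p ≠ q ∧ taxi p q = m)).card

/-!
Since `m ≥ max Lx Ly`, two sites at distance `m` differ in both coordinates, so every pair can be
written uniquely as `(p, q)` with `p.1 < q.1`, and then either `p.2 < q.2` or `p.2 > q.2`; the
reflection `y ↦ Ly + 1 - y` exchanges the two kinds. A pair of the first kind with horizontal
displacement `m - Ly + 1 + j` (`0 ≤ j < k`) has vertical displacement `Ly - 1 - j`, which leaves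
`(k - j) * (j + 1)` positions for `p`, and `∑_{j<k} (k - j) (j + 1) = k (k + 1) (k + 2) / 6`.
-/

open Finset

theorem card_filter_lt_eq_card_filter_powersetCard_two {α β : Type*} [DecidableEq α]
    [LinearOrder β] (s : Finset α) (f : α → β) (r : α → α → Prop) [DecidableRel r]
    (hr : ∀ p q, r p q → r q p)
    (hf : ∀ p ∈ s, ∀ q ∈ s, r p q → f p ≠ f q) :
    #{pq ∈ s ×ˢ s | f pq.1 < f pq.2 ∧ r pq.1 pq.2} =
      #{t ∈ s.powersetCard 2 | ∃ p ∈ t, ∃ q ∈ t, p ≠ q ∧ r p q} := by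
  refine card_bij (fun pq _ => {pq.1, pq.2}) ?_ ?_ ?_
  · rintro ⟨p, q⟩ h
    simp only [mem_filter, mem_product] at h
    obtain ⟨⟨hp, hq⟩, hlt, hpq⟩ := h
    have hne : p ≠ q := fun h => hlt.ne (congrArg f h)
    simp only [mem_filter, mem_powersetCard, insert_subset_iff, singleton_subset_iff]
    exact ⟨⟨⟨hp, hq⟩, card_pair hne⟩, p, by simp, q, by simp, hne, hpq⟩
  · rintro ⟨p, q⟩ h ⟨p', q'⟩ h' e
    simp only [mem_filter] at h h'
    have hp : p ∈ ({p', q'} : Finset α) := e ▸ by simp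
    have hq : q ∈ ({p', q'} : Finset α) := e ▸ by simp
    simp only [mem_insert, mem_singleton] at hp hq
    grind
  · intro t ht
    simp only [mem_filter, mem_powersetCard] at ht
    obtain ⟨⟨hts, htc⟩, p, hp, q, hq, hne, hpq⟩ := ht
    have ht : {p, q} = t :=
      eq_of_subset_of_card_le (insert_subset hp (singleton_subset_iff.2 hq))
        (by rw [htc, card_pair hne])
    rcases (hf p (hts hp) q (hts hq) hpq).lt_or_gt with hlt | hlt
    · exact ⟨(p, q), by simp [hts hp, hts hq, hlt, hpq], ht⟩
    · exact ⟨(q, p), by simp [hts hp, hts hq, hlt, hr p q hpq], pair_comm q p ▸ ht⟩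

theorem six_mul_sum_range_sub_mul_succ (n : ℕ) :
    6 * ∑ j ∈ range n, ((n : ℤ) - j) * (j + 1) = n * (n + 1) * (n + 2) := by
  induction n with
  | zero => simp
  | succ n ih =>
    have gauss : 2 * ∑ j ∈ range (n + 1), ((j : ℤ) + 1) = (n + 1) * (n + 2) := by
      have := sum_range_id_mul_two (n + 2)
      rw [sum_range_succ'] at this
      zify at this
      push_cast at this
      linarith
    calc 6 * ∑ j ∈ range (n + 1), (((n + 1 : ℕ) : ℤ) - j) * (j + 1)
        = 6 * ∑ j ∈ range (n + 1), ((n : ℤ) - j) * (j + 1)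
          + 3 * (2 * ∑ j ∈ range (n + 1), ((j : ℤ) + 1)) := by
          rw [mul_sum, mul_sum, mul_sum, mul_sum, ← sum_add_distrib]
          refine sum_congr rfl fun j _ => ?_
          push_cast; ring
      _ = _ := by rw [sum_range_succ, gauss, mul_add, ih]; push_cast; ring

section Lattice

variable {Lx Ly m : ℤ}

theorem mem_sites {p : ℤ × ℤ} :
    p ∈ sites Lx Ly ↔ 1 ≤ p.1 ∧ p.1 ≤ Lx ∧ 1 ≤ p.2 ∧ p.2 ≤ Ly := by
  simp only [sites, mem_Icc, Prod.le_def]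
  tauto

theorem taxi_comm (p q : ℤ × ℤ) : taxi p q = taxi q p := by
  simp only [taxi, abs_sub_comm]

theorem taxi_eq_natAbs (p q : ℤ × ℤ) :
    taxi p q = (p.1 - q.1).natAbs + (p.2 - q.2).natAbs := by
  simp only [taxi, Int.natCast_natAbs]

variable (Lx Ly m) in
noncomputable def eastPairs : Finset ((ℤ × ℤ) × (ℤ × ℤ)) :=
  {pq ∈ sites Lx Ly ×ˢ sites Lx Ly | pq.1.1 < pq.2.1 ∧ taxi pq.1 pq.2 = m}

theorem mem_eastPairs {p q : ℤ × ℤ} :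
    (p, q) ∈ eastPairs Lx Ly m ↔
      p ∈ sites Lx Ly ∧ q ∈ sites Lx Ly ∧ p.1 < q.1 ∧ taxi p q = m := by
  simp only [eastPairs, mem_filter, mem_product, and_assoc]

theorem pairCount_eq_card_eastPairs (hLy : Ly ≤ m) :
    pairCount Lx Ly m = #(eastPairs Lx Ly m) := by
  refine (card_filter_lt_eq_card_filter_powersetCard_two (sites Lx Ly) Prod.fst
    (fun p q => taxi p q = m) (fun p q h => (taxi_comm q p).trans h) ?_).symm
  intro p hp q hq hpq hx
  rw [mem_sites] at hp hq
  rw [taxi_eq_natAbs] at hpq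
  omega

theorem card_eastPairs_filter_not_lt (hLx : Lx ≤ m) :
    #{pq ∈ eastPairs Lx Ly m | ¬pq.1.2 < pq.2.2} =
      #{pq ∈ eastPairs Lx Ly m | pq.1.2 < pq.2.2} := by
  let reflect : (ℤ × ℤ) × (ℤ × ℤ) → (ℤ × ℤ) × (ℤ × ℤ) :=
    fun pq => ((pq.1.1, Ly + 1 - pq.1.2), (pq.2.1, Ly + 1 - pq.2.2))
  refine card_nbij' reflect reflect ?_ ?_ ?_ ?_ <;> rintro ⟨⟨a, b⟩, ⟨c, d⟩⟩ h <;>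
    simp only [coe_filter, Set.mem_ofPred_eq, mem_eastPairs, mem_sites, taxi_eq_natAbs,
      reflect, Prod.mk.injEq, true_and] at h ⊢ <;> omega

theorem card_eastPairs_filter_lt (k : ℕ) (hk : (k : ℤ) = Lx + Ly - 1 - m)
    (hLx : Lx ≤ m) (hLy : Ly ≤ m) :
    (#{pq ∈ eastPairs Lx Ly m | pq.1.2 < pq.2.2} : ℤ) =
      ∑ j ∈ range k, ((k : ℤ) - j) * (j + 1) := by
  have hbij : #{pq ∈ eastPairs Lx Ly m | pq.1.2 < pq.2.2} =
      #((range k).sigma fun j => Icc (1 : ℤ) (k - j) ×ˢ Icc (1 : ℤ) (j + 1)) := by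
    refine card_nbij'
      (fun pq => ⟨(pq.2.1 - pq.1.1 - (m - Ly + 1)).toNat, pq.1⟩)
      (fun x => (x.2, (x.2.1 + (m - Ly + 1 + x.1), x.2.2 + (Ly - 1 - x.1)))) ?_ ?_ ?_ ?_
    · rintro ⟨⟨a, b⟩, ⟨c, d⟩⟩ h
      simp only [coe_filter, Set.mem_ofPred_eq, mem_eastPairs, mem_sites, taxi_eq_natAbs,
        coe_sigma, Set.mem_sigma_iff, coe_range, Set.mem_Iio, coe_product, Set.mem_prod,
        coe_Icc, Set.mem_Icc] at h ⊢
      omega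
    · rintro ⟨j, x, y⟩ h
      simp only [coe_filter, Set.mem_ofPred_eq, mem_eastPairs, mem_sites, taxi_eq_natAbs,
        coe_sigma, Set.mem_sigma_iff, coe_range, Set.mem_Iio, coe_product, Set.mem_prod,
        coe_Icc, Set.mem_Icc] at h ⊢
      omega
    · rintro ⟨⟨a, b⟩, ⟨c, d⟩⟩ h
      simp only [coe_filter, Set.mem_ofPred_eq, mem_eastPairs, mem_sites, taxi_eq_natAbs] at h
      simp only [Prod.mk.injEq, true_and]
      omega
    · rintro ⟨j, x, y⟩ h
      simp only [coe_sigma, Set.mem_sigma_iff, coe_range, Set.mem_Iio] at h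
      simp only [Sigma.mk.inj_iff, heq_eq_eq, and_true]
      omega
  rw [hbij, card_sigma, Nat.cast_sum]
  refine sum_congr rfl fun j hj => ?_
  rw [mem_range] at hj
  rw [card_product, Int.card_Icc, Int.card_Icc, Nat.cast_mul,
    Int.toNat_of_nonneg (by omega), Int.toNat_of_nonneg (by omega)]
  ring

end Lattice

theorem stmt1_general (Lx Ly m : ℤ)
    (hm1 : max Lx Ly ≤ m) (hm2 : m ≤ Lx + Ly - 2) :
    (pairCount Lx Ly m : ℤ) =
      (Lx + Ly - 1 - m) * ((Lx + Ly - 1 - m) + 1) * ((Lx + Ly - 1 - m) + 2) / 3 := by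
  obtain ⟨k, hk⟩ : ∃ k : ℕ, (k : ℤ) = Lx + Ly - 1 - m :=
    ⟨(Lx + Ly - 1 - m).toNat, by omega⟩
  have hLx : Lx ≤ m := le_of_max_le_left hm1
  have hLy : Ly ≤ m := le_of_max_le_right hm1
  rw [pairCount_eq_card_eastPairs hLy,
    ← card_filter_add_card_filter_not (s := eastPairs Lx Ly m) (fun pq => pq.1.2 < pq.2.2),
    card_eastPairs_filter_not_lt hLx, Nat.cast_add, card_eastPairs_filter_lt k hk hLx hLy,
    ← hk]
  have := six_mul_sum_range_sub_mul_succ k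
  omega

theorem stmt1 (Lx Ly m : ℤ) (hLx : 1 ≤ Lx) (hLy : 1 ≤ Ly)
    (hm1 : max Lx Ly ≤ m) (hm2 : m ≤ Lx + Ly - 2) :
    (pairCount Lx Ly m : ℤ) =
      (Lx + Ly - 1 - m) * ((Lx + Ly - 1 - m) + 1) * ((Lx + Ly - 1 - m) + 2) / 3 :=
  stmt1_general Lx Ly m hm1 hm2
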